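/- arXiv:1512.05539 — 2 statements merged into one kernel-verified Lean document; each statement's English description precedes it below -/
import Mathlib

section
/- Let ρ be a bipartite density matrix on ℂ^{d₁} ⊗ ℂ^{d₂}, i.e. a positive semidefinite matrix indexed by Fin d₁ × Fin d₂ with trace 1, and suppose ρ is separable: ρ = ∑_i p_i (A_i ⊗ B_i) (Kronecker product) with p_i ≥ 0, ∑_i p_i = 1, and A_i, B_i density matrices of sizes d₁ and d₂. Then tr ρ² ≤ tr (ρ_A)² and tr ρ² ≤ tr (ρ_B)², where ρ_A and ρ_B are the two partial traces of ρ. -/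
/-!
Write ρ = ∑ pᵢ Aᵢ ⊗ Bᵢ. Then ρ_A = ∑ pᵢ Aᵢ and ρ_B = ∑ pᵢ Bᵢ, and the purities expand as
tr ρ² = ∑ pᵢ pⱼ tr(AᵢAⱼ) tr(BᵢBⱼ), tr ρ_A² = ∑ pᵢ pⱼ tr(AᵢAⱼ), tr ρ_B² = ∑ pᵢ pⱼ tr(BᵢBⱼ).
So it suffices that 0 ≤ tr(AB) ≤ tr A · tr B for positive semidefinite A, B: writing A = XᴴX and
B = YᴴY, tr(AB) = ‖YXᴴ‖² in the Frobenius norm, which is submultiplicative, and ‖X‖² = tr A.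
-/

open scoped ComplexOrder Kronecker

noncomputable section

/-- Partial trace over the second factor. -/
def ptA {d₁ d₂ : ℕ} (ρ : Matrix (Fin d₁ × Fin d₂) (Fin d₁ × Fin d₂) ℂ) :
    Matrix (Fin d₁) (Fin d₁) ℂ :=
  Matrix.of fun x x' => ∑ y : Fin d₂, ρ (x, y) (x', y)

/-- Partial trace over the first factor. -/
def ptB {d₁ d₂ : ℕ} (ρ : Matrix (Fin d₁ × Fin d₂) (Fin d₁ × Fin d₂) ℂ) :
    Matrix (Fin d₂) (Fin d₂) ℂ :=
  Matrix.of fun y y' => ∑ x : Fin d₁, ρ (x, y) (x, y')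

namespace Matrix

variable {n m : Type*} [Fintype n] [Fintype m]

section RCLike

variable {𝕜 : Type*} [RCLike 𝕜]

open scoped Matrix.Norms.Frobenius

theorem trace_conjTranspose_mul_self_eq_frobenius_norm_sq (X : Matrix m n 𝕜) :
    (Xᴴ * X).trace = ((‖X‖ ^ 2 : ℝ) : 𝕜) := by
  change _ = ((‖WithLp.toLp 2 fun i => WithLp.toLp 2 (X i)‖ ^ 2 : ℝ) : 𝕜)
  simp only [PiLp.norm_sq_eq_of_L2, trace, diag, mul_apply, conjTranspose_apply]
  rw [Finset.sum_comm]
  push_cast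
  refine Finset.sum_congr rfl fun i _ => Finset.sum_congr rfl fun j _ => ?_
  rw [RCLike.star_def, RCLike.conj_mul]

theorem trace_conjTranspose_mul_self_mul_conjTranspose_mul_self (X Y : Matrix n n 𝕜) :
    (Xᴴ * X * (Yᴴ * Y)).trace = ((‖Y * Xᴴ‖ ^ 2 : ℝ) : 𝕜) := by
  rw [← trace_conjTranspose_mul_self_eq_frobenius_norm_sq, Matrix.mul_assoc, trace_mul_comm,
    conjTranspose_mul, conjTranspose_conjTranspose]
  simp only [Matrix.mul_assoc]

theorem PosSemidef.exists_eq_conjTranspose_mul_self {A : Matrix n n 𝕜} (hA : A.PosSemidef) :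
    ∃ X : Matrix n n 𝕜, A = Xᴴ * X := by
  classical
  open scoped MatrixOrder Matrix.Norms.L2Operator in
  exact CStarAlgebra.nonneg_iff_eq_star_mul_self.mp hA.nonneg

theorem PosSemidef.trace_mul_nonneg {A B : Matrix n n 𝕜} (hA : A.PosSemidef)
    (hB : B.PosSemidef) : 0 ≤ (A * B).trace := by
  obtain ⟨X, rfl⟩ := hA.exists_eq_conjTranspose_mul_self
  obtain ⟨Y, rfl⟩ := hB.exists_eq_conjTranspose_mul_self
  rw [trace_conjTranspose_mul_self_mul_conjTranspose_mul_self, RCLike.ofReal_nonneg]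
  positivity

theorem PosSemidef.trace_mul_le_trace_mul_trace {A B : Matrix n n 𝕜} (hA : A.PosSemidef)
    (hB : B.PosSemidef) : (A * B).trace ≤ A.trace * B.trace := by
  obtain ⟨X, rfl⟩ := hA.exists_eq_conjTranspose_mul_self
  obtain ⟨Y, rfl⟩ := hB.exists_eq_conjTranspose_mul_self
  rw [trace_conjTranspose_mul_self_mul_conjTranspose_mul_self,
    trace_conjTranspose_mul_self_eq_frobenius_norm_sq,
    trace_conjTranspose_mul_self_eq_frobenius_norm_sq, ← RCLike.ofReal_mul,
    RCLike.ofReal_le_ofReal, ← mul_pow, mul_comm]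
  gcongr
  simpa only [frobenius_norm_conjTranspose] using frobenius_norm_mul Y Xᴴ

end RCLike

section Expansion

variable {R ι : Type*} [CommSemiring R] [Fintype ι]

theorem trace_sum_smul_mul_sum_smul (c : ι → R) (X Y : ι → Matrix n n R) :
    ((∑ i, c i • X i) * ∑ j, c j • Y j).trace = ∑ i, ∑ j, c i * c j * (X i * Y j).trace := by
  simp only [Finset.sum_mul_sum, trace_sum, smul_mul_smul_comm, trace_smul, smul_eq_mul]

theorem trace_sum_smul_kronecker_mul_self (c : ι → R) (A : ι → Matrix n n R)
    (B : ι → Matrix m m R) :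
    ((∑ i, c i • (A i ⊗ₖ B i)) * ∑ i, c i • (A i ⊗ₖ B i)).trace =
      ∑ i, ∑ j, c i * c j * ((A i * A j).trace * (B i * B j).trace) := by
  simp only [trace_sum_smul_mul_sum_smul, ← mul_kronecker_mul, trace_kronecker]

end Expansion

end Matrix

open Matrix

section PartialTrace

variable {d₁ d₂ : ℕ} {ι : Type*} [Fintype ι] (c : ι → ℂ)
  (A : ι → Matrix (Fin d₁) (Fin d₁) ℂ) (B : ι → Matrix (Fin d₂) (Fin d₂) ℂ)

theorem ptA_sum_smul_kronecker :
    ptA (∑ i, c i • (A i ⊗ₖ B i)) = ∑ i, (c i * (B i).trace) • A i := by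
  ext x x'
  simp only [ptA, of_apply, Matrix.sum_apply, Matrix.smul_apply, kroneckerMap_apply, smul_eq_mul,
    trace, diag]
  rw [Finset.sum_comm]
  refine Finset.sum_congr rfl fun i _ => ?_
  simp only [← Finset.mul_sum]
  ring

theorem ptB_sum_smul_kronecker :
    ptB (∑ i, c i • (A i ⊗ₖ B i)) = ∑ i, (c i * (A i).trace) • B i := by
  ext y y'
  simp only [ptB, of_apply, Matrix.sum_apply, Matrix.smul_apply, kroneckerMap_apply, smul_eq_mul,
    trace, diag]
  rw [Finset.sum_comm]
  refine Finset.sum_congr rfl fun i _ => ?_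
  simp only [← Finset.mul_sum, ← Finset.sum_mul, mul_assoc]

end PartialTrace

theorem purity_le_partialTrace_purity_of_separable_general
    (d₁ d₂ : ℕ) (ρ : Matrix (Fin d₁ × Fin d₂) (Fin d₁ × Fin d₂) ℂ)
    (hsep : ∃ (m : ℕ) (p : Fin m → ℝ)
      (A : Fin m → Matrix (Fin d₁) (Fin d₁) ℂ) (B : Fin m → Matrix (Fin d₂) (Fin d₂) ℂ),
      (∀ i, 0 ≤ p i) ∧ (∑ i, p i = 1) ∧
      (∀ i, (A i).PosSemidef ∧ (A i).trace = 1) ∧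
      (∀ i, (B i).PosSemidef ∧ (B i).trace = 1) ∧
      ρ = ∑ i, (p i : ℂ) • (A i ⊗ₖ B i)) :
    (ρ * ρ).trace ≤ (ptA ρ * ptA ρ).trace ∧ (ρ * ρ).trace ≤ (ptB ρ * ptB ρ).trace := by
  obtain ⟨m, p, A, B, hp, -, hA, hB, rfl⟩ := hsep
  have hpp i j : 0 ≤ (p i : ℂ) * p j := by exact_mod_cast mul_nonneg (hp i) (hp j)
  have trace_mul_le_one {k : ℕ} {X Y : Matrix (Fin k) (Fin k) ℂ}
      (hX : X.PosSemidef ∧ X.trace = 1) (hY : Y.PosSemidef ∧ Y.trace = 1) :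
      (X * Y).trace ≤ 1 := by
    simpa [hX.2, hY.2] using hX.1.trace_mul_le_trace_mul_trace hY.1
  rw [trace_sum_smul_kronecker_mul_self]
  simp only [ptA_sum_smul_kronecker, ptB_sum_smul_kronecker, (hA _).2, (hB _).2, mul_one,
    trace_sum_smul_mul_sum_smul]
  constructor
  · gcongr with i _ j _
    · exact hpp i j
    · exact mul_le_of_le_one_right ((hA i).1.trace_mul_nonneg (hA j).1)
        (trace_mul_le_one (hB i) (hB j))
  · gcongr with i _ j _
    · exact hpp i j
    · exact mul_le_of_le_one_left ((hB i).1.trace_mul_nonneg (hB j).1)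
        (trace_mul_le_one (hA i) (hA j))

/-- If a bipartite density matrix is separable, then its purity is dominated by the purity of
each of its two partial traces. -/
theorem purity_le_partialTrace_purity_of_separable
    (d₁ d₂ : ℕ) (ρ : Matrix (Fin d₁ × Fin d₂) (Fin d₁ × Fin d₂) ℂ)
    (hpsd : ρ.PosSemidef) (htr : ρ.trace = 1)
    (hsep : ∃ (m : ℕ) (p : Fin m → ℝ)
      (A : Fin m → Matrix (Fin d₁) (Fin d₁) ℂ) (B : Fin m → Matrix (Fin d₂) (Fin d₂) ℂ),
      (∀ i, 0 ≤ p i) ∧ (∑ i, p i = 1) ∧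
      (∀ i, (A i).PosSemidef ∧ (A i).trace = 1) ∧
      (∀ i, (B i).PosSemidef ∧ (B i).trace = 1) ∧
      ρ = ∑ i, (p i : ℂ) • (A i ⊗ₖ B i)) :
    (ρ * ρ).trace ≤ (ptA ρ * ptA ρ).trace ∧ (ρ * ρ).trace ≤ (ptB ρ * ptB ρ).trace :=
  purity_le_partialTrace_purity_of_separable_general d₁ d₂ ρ hsep
end
end

section
/- (Theorem 1) Fix N ≥ 1 and d > M ≥ 2. Let Φ_1, …, Φ_M be unit vectors indexed by (Fin N → Fin d) such that for every k and every subsystem j : Fin N the one-qudit reduced density matrix of |Φ_k⟩⟨Φ_k| at site j equals (1/d)·I_d. Let λ_1, …, λ_M > 0 with ∑_k λ_k = 1. Then the mixed state ρ = ∑_k λ_k |Φ_k⟩⟨Φ_k| is entangled, i.e. ρ is not fully separable. -/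
/-!
Suppose `ρ = ∑ᵢ pᵢ ⊗ₖ σᵢₖ` and fix a site `j`. Finitely many proper kernels cannot cover
`ℂᵈ`, so there are vectors `z k` with `σᵢₖ z k ≠ 0` for all `i`; and since `M < d` there is
`v ≠ 0` such that the product vector `V = v ⊗ (⊗_{k ≠ j} z k)` is orthogonal to every `Φₖ`.
Then `ρ V = 0`, so `0 = ⟨V, ρ V⟩ = ∑ᵢ pᵢ ⟨v, σᵢⱼ v⟩ ∏_{k ≠ j} ⟨z k, σᵢₖ z k⟩`, and positivity
forces `σᵢⱼ v = 0` whenever `pᵢ ≠ 0`. Hence the reduced matrix `ρⱼ = ∑ᵢ pᵢ σᵢⱼ` annihilates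
`v`, whereas `ρⱼ = I / d`.
-/

open scoped ComplexOrder

noncomputable section

/-- Extend an assignment `g` on the indices other than `j` by the value `x` at position `j`. -/
def insertAt {N d : ℕ} (j : Fin N) (x : Fin d) (g : {i : Fin N // i ≠ j} → Fin d) :
    Fin N → Fin d :=
  fun i => if h : i = j then x else g ⟨i, h⟩

/-- The one-qudit reduced density matrix at site `j`. -/
def reduced {N d : ℕ} (ρ : Matrix (Fin N → Fin d) (Fin N → Fin d) ℂ) (j : Fin N) :
    Matrix (Fin d) (Fin d) ℂ :=
  Matrix.of fun x y => ∑ g : {i : Fin N // i ≠ j} → Fin d,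
    ρ (insertAt j x g) (insertAt j y g)

/-- Full separability of an `N`-partite `d`-level state. -/
def FullySeparable {N d : ℕ} (ρ : Matrix (Fin N → Fin d) (Fin N → Fin d) ℂ) : Prop :=
  ∃ (m : ℕ) (p : Fin m → ℝ) (σ : Fin m → Fin N → Matrix (Fin d) (Fin d) ℂ),
    (∀ i, 0 ≤ p i) ∧ (∑ i, p i = 1) ∧
    (∀ i k, (σ i k).PosSemidef ∧ (σ i k).trace = 1) ∧
    (∀ a b, ρ a b = ∑ i, (p i : ℂ) * ∏ k, σ i k (a k) (b k))

/-- The pure-state density matrix `|Φ⟩⟨Φ|`. -/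
def pureMat {α : Type*} (Φ : α → ℂ) : Matrix α α ℂ :=
  Matrix.of fun a b => Φ a * (starRingEnd ℂ) (Φ b)

open Matrix

lemma LinearMap.exists_forall_apply_ne_zero {K V W τ : Type*} [Field K] [Infinite K]
    [AddCommGroup V] [Module K V] [AddCommGroup W] [Module K W] [Finite τ]
    (f : τ → V →ₗ[K] W) (hf : ∀ i, f i ≠ 0) : ∃ z, ∀ i, f i z ≠ 0 := by
  by_contra! h
  obtain ⟨i, hi⟩ := Subspace.exists_eq_top_of_iUnion_eq_univ (p := fun i => LinearMap.ker (f i))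
    (Set.eq_univ_of_forall fun z => Set.mem_iUnion.mpr (h z))
  exact hf i (LinearMap.ker_eq_top.mp hi)

lemma Matrix.exists_forall_mulVec_ne_zero {K τ n : Type*} [Field K] [Infinite K] [Finite τ]
    [Fintype n] [DecidableEq n] (A : τ → Matrix n n K) (hA : ∀ i, A i ≠ 0) : ∃ z, ∀ i, A i *ᵥ z ≠ 0 := by
  simpa using LinearMap.exists_forall_apply_ne_zero (fun i => toLin' (A i))
    fun i => (LinearEquiv.map_ne_zero_iff _).mpr (hA i)

lemma pureMat_mulVec {α : Type*} [Fintype α] (Φ V : α → ℂ) :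
    pureMat Φ *ᵥ V = (star Φ ⬝ᵥ V) • Φ := by
  ext a
  simp [pureMat, mulVec, dotProduct, Finset.mul_sum, mul_comm, mul_left_comm]

section ProductState

variable {ι κ : Type*} [Fintype ι]

def prodMat (σ : ι → Matrix κ κ ℂ) : Matrix (ι → κ) (ι → κ) ℂ :=
  Matrix.of fun a b => ∏ k, σ k (a k) (b k)

/-- Bundled as a multilinear map so that `prodVec (update z j v)` is linear in `v`. -/
def prodVec : MultilinearMap ℂ (fun _ : ι => κ → ℂ) ((ι → κ) → ℂ) :=
  MultilinearMap.pi fun a => (MultilinearMap.mkPiAlgebra ℂ ι ℂ).compLinearMap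
    fun k => LinearMap.proj (a k)

@[simp]
lemma prodVec_apply (y : ι → κ → ℂ) (a : ι → κ) : prodVec y a = ∏ k, y k (a k) := by
  simp [prodVec]

lemma dotProduct_prodMat_mulVec_prodVec [DecidableEq ι] [Fintype κ] (σ : ι → Matrix κ κ ℂ)
    (y : ι → κ → ℂ) :
    star (prodVec y) ⬝ᵥ prodMat σ *ᵥ prodVec y = ∏ k, star (y k) ⬝ᵥ σ k *ᵥ y k := by
  simp only [dotProduct, mulVec, prodMat, prodVec_apply, of_apply, Pi.star_apply, star_prod,
    Finset.mul_sum, ← Finset.prod_mul_distrib, Fintype.prod_sum]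

lemma exists_mulVec_eq_zero_of_mulVec_prodVec_eq_zero [DecidableEq ι] [Fintype κ] {τ : Type*}
    [Fintype τ] {p : τ → ℝ} (hp : ∀ i, 0 ≤ p i) {σ : τ → ι → Matrix κ κ ℂ}
    (hσ : ∀ i k, (σ i k).PosSemidef) {y : ι → κ → ℂ}
    (h : (∑ i, (p i : ℂ) • prodMat (σ i)) *ᵥ prodVec y = 0) {i : τ} (hi : p i ≠ 0) :
    ∃ k, σ i k *ᵥ y k = 0 := by
  have hsum : ∑ i, (p i : ℂ) * ∏ k, star (y k) ⬝ᵥ σ i k *ᵥ y k = 0 := by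
    simpa [sum_mulVec, smul_mulVec, dotProduct_sum, dotProduct_prodMat_mulVec_prodVec] using
      congrArg (star (prodVec y) ⬝ᵥ ·) h
  have hnonneg : ∀ i, 0 ≤ (p i : ℂ) * ∏ k, star (y k) ⬝ᵥ σ i k *ᵥ y k := fun i =>
    mul_nonneg (Complex.zero_le_real.mpr (hp i))
      (Finset.prod_nonneg fun k _ => (hσ i k).dotProduct_mulVec_nonneg (y k))
  have hterm :=
    (Finset.sum_eq_zero_iff_of_nonneg fun i _ => hnonneg i).mp hsum i (Finset.mem_univ i)
  obtain ⟨k, -, hk⟩ := Finset.prod_eq_zero_iff.mp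
    ((mul_eq_zero.mp hterm).resolve_left (Complex.ofReal_ne_zero.mpr hi))
  exact ⟨k, ((hσ i k).dotProduct_mulVec_zero_iff (y k)).mp hk⟩

lemma exists_ne_zero_forall_dotProduct_prodVec_update_eq_zero [DecidableEq ι] [Fintype κ]
    {τ : Type*} [Fintype τ] (hτ : Fintype.card τ < Fintype.card κ)
    (Φ : τ → (ι → κ) → ℂ) (z : ι → κ → ℂ) (j : ι) :
    ∃ v ≠ 0, ∀ k, star (Φ k) ⬝ᵥ prodVec (Function.update z j v) = 0 := by
  have hker := LinearMap.ker_ne_bot_of_finrank_lt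
    (f := (Matrix.of (star Φ)).mulVecLin ∘ₗ prodVec.toLinearMap z j) (by simpa using hτ)
  obtain ⟨v, hv, hv0⟩ := (Submodule.ne_bot_iff _).mp hker
  exact ⟨v, hv0, fun k => congrFun (LinearMap.mem_ker.mp hv) k⟩

end ProductState

section Reduced

variable {N d : ℕ}

@[simp]
lemma insertAt_self (j : Fin N) (x : Fin d) (g : {i : Fin N // i ≠ j} → Fin d) :
    insertAt j x g j = x :=
  dif_pos rfl

@[simp]
lemma insertAt_val (j : Fin N) (x : Fin d) (g : {i : Fin N // i ≠ j} → Fin d)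
    (k : {i : Fin N // i ≠ j}) : insertAt j x g k = g k :=
  dif_neg k.2

lemma reduced_sum_smul {R τ : Type*} [Monoid R] [DistribMulAction R ℂ] (s : Finset τ) (c : τ → R)
    (ρ : τ → Matrix (Fin N → Fin d) (Fin N → Fin d) ℂ) (j : Fin N) :
    reduced (∑ i ∈ s, c i • ρ i) j = ∑ i ∈ s, c i • reduced (ρ i) j := by
  ext x y
  simp [reduced, Matrix.sum_apply, Finset.smul_sum, Finset.sum_comm (s := s)]

lemma reduced_prodMat (σ : Fin N → Matrix (Fin d) (Fin d) ℂ) (j : Fin N) :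
    reduced (prodMat σ) j = (∏ k : {i : Fin N // i ≠ j}, (σ k).trace) • σ j := by
  classical
  ext x y
  simp only [reduced, prodMat, of_apply, Matrix.smul_apply, smul_eq_mul, trace, diag_apply]
  rw [Fintype.prod_sum, mul_comm, Finset.mul_sum]
  refine Finset.sum_congr rfl fun g _ => ?_
  rw [Fintype.prod_eq_mul_prod_subtype_ne _ j]
  simp

end Reduced

theorem mixture_entangled_of_card_lt_dim_general
    (N d M : ℕ) (hN : 1 ≤ N) (hMd : M < d)
    (Φ : Fin M → (Fin N → Fin d) → ℂ)
    (hred : ∀ k, ∀ j : Fin N, reduced (pureMat (Φ k)) j = (d : ℂ)⁻¹ • 1)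
    (lam : Fin M → ℝ) (h1 : ∑ k, lam k = 1) :
    ¬ FullySeparable (∑ k, lam k • pureMat (Φ k)) := by
  rintro ⟨m, p, σ, hp0, -, hσ, hrep⟩
  set ρ := ∑ k, lam k • pureMat (Φ k)
  have hρ : ρ = ∑ i, (p i : ℂ) • prodMat (σ i) := by
    ext a b
    simp [hrep, prodMat, Matrix.sum_apply]
  let j : Fin N := ⟨0, hN⟩
  choose z hz using fun k => exists_forall_mulVec_ne_zero (fun i => σ i k)
    fun i h => by simpa [h] using (hσ i k).2
  obtain ⟨v, hv0, hvΦ⟩ :=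
    exists_ne_zero_forall_dotProduct_prodVec_update_eq_zero (by simpa using hMd) Φ z j
  have hρV : ρ *ᵥ prodVec (Function.update z j v) = 0 := by
    simp [ρ, sum_mulVec, smul_mulVec, pureMat_mulVec, hvΦ]
  have hσv : ∀ i, p i • (σ i j *ᵥ v) = 0 := by
    intro i
    rcases eq_or_ne (p i) 0 with hi | hi
    · simp [hi]
    obtain ⟨k, hk⟩ := exists_mulVec_eq_zero_of_mulVec_prodVec_eq_zero hp0
      (fun i k => (hσ i k).1) (hρ ▸ hρV) hi
    by_cases hkj : k = j
    · subst hkj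
      rw [Function.update_self] at hk
      rw [hk, smul_zero]
    · exact absurd (by simpa [hkj] using hk) (hz k i)
  have hmix : reduced ρ j = (d : ℂ)⁻¹ • 1 := by
    simp [ρ, reduced_sum_smul, hred, ← Finset.sum_smul, h1]
  have hρjv : reduced ρ j *ᵥ v = 0 := by
    simp [hρ, reduced_sum_smul, reduced_prodMat, (hσ _ _).2, sum_mulVec, smul_mulVec, hσv]
  simp [hmix, smul_mulVec, hv0] at hρjv
  omega

/-- Theorem 1 of the paper: for `d > M ≥ 2`, any mixture with strictly positive weights of
`M` entangled `N`-partite pure states, all of whose one-qudit reduced density matrices are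
maximally mixed, is entangled (not fully separable). -/
theorem mixture_entangled_of_card_lt_dim
    (N d M : ℕ) (hN : 1 ≤ N) (hM : 2 ≤ M) (hMd : M < d)
    (Φ : Fin M → (Fin N → Fin d) → ℂ)
    (hunit : ∀ k, ∑ a, ‖Φ k a‖ ^ 2 = 1)
    (hred : ∀ k, ∀ j : Fin N, reduced (pureMat (Φ k)) j = (d : ℂ)⁻¹ • 1)
    (lam : Fin M → ℝ) (h0 : ∀ k, 0 < lam k) (h1 : ∑ k, lam k = 1) :
    ¬ FullySeparable (∑ k, lam k • pureMat (Φ k)) :=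
  mixture_entangled_of_card_lt_dim_general N d M hN hMd Φ hred lam h1
end
end
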